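/- For the one-dimensional kernel k(z) = 1/z² on (0, ∞) and the ε-regularized step u_ε as above on one period, the double integral ∫∫_{0<x<x+z<L} (u_ε(x+z) - u_ε(x))²/z² dx dz diverges logarithmically: there exist constants 0 < c₁ ≤ c₂ (depending on L) such that c₁ ln(1/ε) ≤ ∫∫ ≤ c₂ ln(1/ε) for all sufficiently small ε > 0. -/

import Mathlib

/-!
For `x ≤ b`, let `E(x) = ∫₀^{b-x} (u(x+z) - u x)² / z² dz`. If `u` takes values in `[0, 1]`,
the tail `z > a` contributes at most `∫_a^∞ z⁻² = 1/a`; so `E(x) ≤ 1/(d - x)` when `u` is constant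
on `[x, d]`, and `E(x) ≤ 2K` when `u` is `K`-Lipschitz (split at `a = 1/K`). The profile `u_ε` is
`2/ε`-Lipschitz, constant on `[0, L/2]` and on `[L/2 + ε, L - ε]`: integrating `1/(d - x)` over
these plateaus up to distance `ε` from their right ends gives `2 log(1/ε) + O(1)`, and the two
layers of width `2ε` around the transitions contribute `O(1)`. Conversely, for `x ∈ [L/4, L/2]`
the jump from `1` to `0` gives `E(x) ≥ 1/(L/2 + ε - x) - O(1)`, whose integral is
`log(1/ε) - O(1)`.
-/

/-- The `ε`-regularized step profile on one period `[0, L]`. -/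
noncomputable def uReg (L ε x : ℝ) : ℝ :=
  if x ≤ L / 2 then 1
  else if x ≤ L / 2 + ε then 1 - (x - L / 2) / ε
  else if x ≤ L - ε then 0
  else (x - (L - ε)) / ε

open MeasureTheory Set Real
open scoped NNReal

def ramp (t : ℝ) : ℝ := max 0 (min 1 t)

lemma ramp_of_nonpos {t : ℝ} (ht : t ≤ 0) : ramp t = 0 :=
  max_eq_left (min_le_of_right_le ht)

lemma ramp_of_one_le {t : ℝ} (ht : 1 ≤ t) : ramp t = 1 := by
  simp [ramp, min_eq_left ht]

lemma ramp_of_mem {t : ℝ} (ht : t ∈ Icc 0 1) : ramp t = t := by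
  simp [ramp, min_eq_right ht.2, ht.1]

lemma lipschitzWith_ramp : LipschitzWith 1 ramp :=
  (LipschitzWith.id.const_min 1).const_max 0

section uReg
variable {L ε x : ℝ}

lemma uReg_eq_ramp (hε : 0 < ε) (hεL : ε ≤ L / 4) (hx : x ≤ L) :
    uReg L ε x = 1 - ramp ((x - L / 2) / ε) + ramp ((x - (L - ε)) / ε) := by
  have hle : ∀ {a : ℝ}, a ≤ 0 → a / ε ≤ 0 := fun h => div_nonpos_of_nonpos_of_nonneg h hε.le
  have hge : ∀ {a : ℝ}, ε ≤ a → 1 ≤ a / ε := fun h => (one_le_div hε).2 h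
  have hmem : ∀ {a : ℝ}, 0 ≤ a → a ≤ ε → a / ε ∈ Icc 0 1 :=
    fun h0 h1 => ⟨div_nonneg h0 hε.le, (div_le_one hε).2 h1⟩
  unfold uReg
  split_ifs with h1 h2 h3
  · rw [ramp_of_nonpos (hle (by linarith)), ramp_of_nonpos (hle (by linarith))]; ring
  · rw [ramp_of_mem (hmem (by linarith) (by linarith)), ramp_of_nonpos (hle (by linarith))]
    ring
  · rw [ramp_of_one_le (hge (by linarith)), ramp_of_nonpos (hle (by linarith))]; ring
  · rw [ramp_of_one_le (hge (by linarith)), ramp_of_mem (hmem (by linarith) (by linarith))]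
    ring

lemma mapsTo_uReg (hε : 0 < ε) : MapsTo (uReg L ε) (Iic L) (Icc 0 1) := by
  intro x hx
  rw [mem_Iic] at hx
  unfold uReg
  split_ifs with h1 h2 h3
  · exact ⟨zero_le_one, le_rfl⟩
  · have : (x - L / 2) / ε ≤ 1 := (div_le_one hε).2 (by linarith)
    exact ⟨by linarith, by linarith [div_nonneg (by linarith : (0:ℝ) ≤ x - L / 2) hε.le]⟩
  · exact ⟨le_rfl, zero_le_one⟩
  · exact ⟨div_nonneg (by linarith) hε.le, (div_le_one hε).2 (by linarith)⟩

lemma lipschitzOnWith_uReg (hε : 0 < ε) (hεL : ε ≤ L / 4) :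
    LipschitzOnWith (2 / ε).toNNReal (uReg L ε) (Iic L) := by
  refine LipschitzOnWith.of_dist_le_mul fun x hx y hy => ?_
  rw [uReg_eq_ramp hε hεL hx, uReg_eq_ramp hε hεL hy, Real.coe_toNNReal _ (by positivity)]
  have key : ∀ c, dist (ramp ((x - c) / ε)) (ramp ((y - c) / ε)) ≤ dist x y / ε := by
    intro c
    calc _ ≤ 1 * dist ((x - c) / ε) ((y - c) / ε) := by
            exact_mod_cast lipschitzWith_ramp.dist_le_mul _ _
      _ = dist x y / ε := by
        rw [one_mul, Real.dist_eq, Real.dist_eq, div_sub_div_same, sub_sub_sub_cancel_right,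
          abs_div, abs_of_pos hε]
  set a := ramp ((x - L / 2) / ε)
  set a' := ramp ((y - L / 2) / ε)
  set c := ramp ((x - (L - ε)) / ε)
  set c' := ramp ((y - (L - ε)) / ε)
  have h1 : |a - a'| ≤ |x - y| / ε := by simpa only [Real.dist_eq] using key (L / 2)
  have h2 : |c - c'| ≤ |x - y| / ε := by simpa only [Real.dist_eq] using key (L - ε)
  calc |1 - a + c - (1 - a' + c')| = |-(a - a') + (c - c')| := by ring_nf
    _ ≤ |a - a'| + |c - c'| := by simpa only [abs_neg] using abs_add_le (-(a - a')) (c - c')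
    _ ≤ 2 / ε * |x - y| := by linarith [show 2 / ε * |x - y| = |x - y| / ε + |x - y| / ε by ring]

lemma uReg_of_le_half (hx : x ≤ L / 2) : uReg L ε x = 1 := if_pos hx

lemma uReg_of_mem_Icc (hε : 0 < ε) (hx : x ∈ Icc (L / 2 + ε) (L - ε)) : uReg L ε x = 0 := by
  obtain ⟨h1, h2⟩ := hx
  unfold uReg
  split_ifs with h3 h4
  · linarith
  · rw [le_antisymm h4 h1, add_sub_cancel_left, div_self hε.ne', sub_self]
  · rfl

lemma measurable_uReg : Measurable (uReg L ε) := by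
  unfold uReg
  refine Measurable.ite measurableSet_Iic measurable_const ?_
  refine Measurable.ite measurableSet_Iic (by fun_prop) ?_
  exact Measurable.ite measurableSet_Iic measurable_const (by fun_prop)

end uReg

lemma rpow_neg_two_eq_one_div_sq {z : ℝ} (hz : 0 < z) : z ^ (-2 : ℝ) = 1 / z ^ 2 := by
  rw [rpow_neg hz.le, rpow_two, one_div]

lemma integrableOn_Ioi_one_div_sq {a : ℝ} (ha : 0 < a) :
    IntegrableOn (fun z : ℝ => 1 / z ^ 2) (Ioi a) :=
  (integrableOn_Ioi_rpow_of_lt (by norm_num : (-2 : ℝ) < -1) ha).congr_fun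
    (fun z hz => rpow_neg_two_eq_one_div_sq (ha.trans hz)) measurableSet_Ioi

lemma integral_Ioi_one_div_sq {a : ℝ} (ha : 0 < a) : ∫ z in Ioi a, 1 / z ^ 2 = 1 / a := by
  calc ∫ z in Ioi a, 1 / z ^ 2 = ∫ z in Ioi a, z ^ (-2 : ℝ) :=
        setIntegral_congr_fun measurableSet_Ioi
          (fun z hz => (rpow_neg_two_eq_one_div_sq (ha.trans hz)).symm)
    _ = 1 / a := by
        rw [integral_Ioi_rpow_of_lt (by norm_num) ha]; norm_num [rpow_neg_one]

lemma integral_Ioo_one_div_sq {p q : ℝ} (hp : 0 < p) (hpq : p ≤ q) :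
    ∫ z in Ioo p q, 1 / z ^ 2 = 1 / p - 1 / q := by
  have hsplit := setIntegral_union Ioc_disjoint_Ioi_same measurableSet_Ioi
    ((integrableOn_Ioi_one_div_sq hp).mono_set (Ioc_subset_Ioi_self))
    (integrableOn_Ioi_one_div_sq (hp.trans_le hpq))
  rw [Ioc_union_Ioi_eq_Ioi hpq, integral_Ioi_one_div_sq hp,
    integral_Ioi_one_div_sq (hp.trans_le hpq), integral_Ioc_eq_integral_Ioo] at hsplit
  linarith

lemma integral_one_div_sub {c d p : ℝ} (hcd : c ≤ d) (hdp : d < p) :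
    ∫ x in c..d, 1 / (p - x) = log (p - c) - log (p - d) := by
  rw [intervalIntegral.integral_comp_sub_left (fun t => 1 / t) p,
    integral_one_div_of_pos (by linarith) (by linarith), log_div (by linarith) (by linarith)]

lemma intervalIntegrable_one_div_sub {c d p : ℝ} (hcd : c ≤ d) (hdp : d < p) :
    IntervalIntegrable (fun x => 1 / (p - x)) volume c d := by
  refine (continuousOn_const.div (continuousOn_const.sub continuousOn_id) fun x hx => ?_)
    |>.intervalIntegrable
  rw [uIcc_of_le hcd] at hx
  exact (sub_pos.2 (hx.2.trans_lt hdp)).ne'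

noncomputable def energyDensity (u : ℝ → ℝ) (b x : ℝ) : ℝ :=
  ∫ z in Ioo 0 (b - x), (u (x + z) - u x) ^ 2 / z ^ 2

section energyDensity
variable {u : ℝ → ℝ} {b x : ℝ} {K : ℝ≥0}

lemma energyDensity_nonneg : 0 ≤ energyDensity u b x :=
  setIntegral_nonneg measurableSet_Ioo fun _ _ => by positivity

lemma sq_sub_le_one_of_mapsTo (hu01 : MapsTo u (Iic b) (Icc 0 1)) {y : ℝ} (hx : x ≤ b) (hy : y ≤ b) :
    (u y - u x) ^ 2 ≤ 1 := by
  obtain ⟨h1, h2⟩ := hu01 (mem_Iic.2 hx)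
  obtain ⟨h3, h4⟩ := hu01 (mem_Iic.2 hy)
  nlinarith

lemma sq_sub_div_sq_le_of_lipschitzOnWith (hlip : LipschitzOnWith K u (Iic b)) {z : ℝ} (hz : 0 < z) (hx : x ≤ b)
    (hxz : x + z ≤ b) : (u (x + z) - u x) ^ 2 / z ^ 2 ≤ K ^ 2 := by
  have h := hlip.dist_le_mul (x + z) hxz x hx
  rw [Real.dist_eq, Real.dist_eq, add_sub_cancel_left, abs_of_pos hz] at h
  rw [div_le_iff₀ (by positivity), ← mul_pow, ← sq_abs]
  exact pow_le_pow_left₀ (abs_nonneg _) h 2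

lemma integrableOn_sq_sub_div_sq (hu : Measurable u) (hlip : LipschitzOnWith K u (Iic b))
    (hx : x ≤ b) :
    IntegrableOn (fun z => (u (x + z) - u x) ^ 2 / z ^ 2) (Ioo 0 (b - x)) := by
  refine IntegrableOn.of_bound measure_Ioo_lt_top (Measurable.aestronglyMeasurable (by fun_prop))
    (K ^ 2) ?_
  rw [ae_restrict_iff' measurableSet_Ioo]
  refine ae_of_all _ fun z hz => ?_
  rw [Real.norm_of_nonneg (by positivity)]
  exact sq_sub_div_sq_le_of_lipschitzOnWith hlip hz.1 hx (by linarith [hz.2])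

lemma measurable_energyDensity (hu : Measurable u) : Measurable (energyDensity u b) := by
  let F : ℝ × ℝ → ℝ := fun p =>
    (Ioo 0 (b - p.1)).indicator (fun z => (u (p.1 + z) - u p.1) ^ 2 / z ^ 2) p.2
  have hF : Measurable F := by
    refine Measurable.ite ?_ (by fun_prop) measurable_const
    exact (measurableSet_lt measurable_const measurable_snd).inter
      (measurableSet_lt measurable_snd (measurable_const.sub measurable_fst))
  have hE : energyDensity u b = fun x => ∫ z, F (x, z) := by
    funext x
    exact (integral_indicator measurableSet_Ioo).symm
  rw [hE]
  exact hF.stronglyMeasurable.integral_prod_right'.measurable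

lemma energyDensity_le_add (hu01 : MapsTo u (Iic b) (Icc 0 1)) (hx : x ≤ b) {a C : ℝ}
    (ha : 0 < a) (hC : 0 ≤ C)
    (hle : ∀ z ∈ Ioc 0 a, x + z ≤ b → (u (x + z) - u x) ^ 2 / z ^ 2 ≤ C) :
    energyDensity u b x ≤ a * C + 1 / a := by
  let g₁ : ℝ → ℝ := (Ioc 0 a).indicator fun _ => C
  let g₂ : ℝ → ℝ := (Ioi a).indicator fun z => 1 / z ^ 2
  let g : ℝ → ℝ := fun z => g₁ z + g₂ z
  have hg₁ : Integrable g₁ :=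
    (integrableOn_const measure_Ioc_lt_top.ne).integrable_indicator measurableSet_Ioc
  have hg₂ : Integrable g₂ :=
    (integrableOn_Ioi_one_div_sq ha).integrable_indicator measurableSet_Ioi
  have hg_int : Integrable g := hg₁.add hg₂
  have hg_nonneg : 0 ≤ g := by
    intro z
    exact add_nonneg (indicator_nonneg (fun _ _ => hC) z)
      (indicator_nonneg (fun _ _ => by positivity) z)
  have hle_g : ∀ z ∈ Ioo 0 (b - x), (u (x + z) - u x) ^ 2 / z ^ 2 ≤ g z := by
    rintro z ⟨hz0, hzb⟩
    by_cases hza : z ≤ a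
    · rw [show g z = C by simp [g, g₁, g₂, hz0, hza]]
      exact hle z ⟨hz0, hza⟩ (by linarith)
    · rw [show g z = 1 / z ^ 2 by simp [g, g₁, g₂, hza, not_le.1 hza]]
      exact div_le_div_of_nonneg_right (sq_sub_le_one_of_mapsTo hu01 hx (y := x + z) (by linarith))
        (sq_nonneg z)
  calc energyDensity u b x ≤ ∫ z in Ioo 0 (b - x), g z := by
        refine integral_mono_of_nonneg (ae_of_all _ fun _ => by positivity)
          hg_int.integrableOn ?_
        exact (ae_restrict_iff' measurableSet_Ioo).2 (ae_of_all _ hle_g)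
    _ ≤ ∫ z in Ioi 0, g z :=
        setIntegral_mono_set hg_int.integrableOn (ae_of_all _ hg_nonneg)
          Ioo_subset_Ioi_self.eventuallyLE
    _ = a * C + 1 / a := by
        rw [integral_add hg₁.integrableOn hg₂.integrableOn, setIntegral_indicator measurableSet_Ioc,
          setIntegral_indicator measurableSet_Ioi, inter_eq_right.2 Ioc_subset_Ioi_self,
          inter_eq_right.2 (Ioi_subset_Ioi ha.le), setIntegral_const,
          integral_Ioi_one_div_sq ha, Real.volume_real_Ioc_of_le ha.le, sub_zero, smul_eq_mul]

lemma energyDensity_le_of_eqOn (hu01 : MapsTo u (Iic b) (Icc 0 1)) {c d v : ℝ}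
    (hconst : EqOn u (fun _ => v) (Icc c d)) (hx : x ∈ Ico c d) (hd : d ≤ b) :
    energyDensity u b x ≤ 1 / (d - x) := by
  have h := energyDensity_le_add hu01 (hx.2.le.trans hd) (sub_pos.2 hx.2) le_rfl
    fun z hz _ => by
      rw [hconst ⟨by linarith [hx.1, hz.1], by linarith [hz.2]⟩,
        hconst (Ico_subset_Icc_self hx), sub_self]
      simp
  simpa using h

lemma energyDensity_le_two_mul (hu01 : MapsTo u (Iic b) (Icc 0 1))
    (hlip : LipschitzOnWith K u (Iic b)) (hK : 0 < K) (hx : x ≤ b) :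
    energyDensity u b x ≤ 2 * K := by
  have hK' : (0 : ℝ) < K := hK
  have h := energyDensity_le_add hu01 hx (one_div_pos.2 hK') (sq_nonneg (K : ℝ))
    fun z hz hxz => sq_sub_div_sq_le_of_lipschitzOnWith hlip hz.1 hx hxz
  calc energyDensity u b x ≤ 1 / K * K ^ 2 + 1 / (1 / K) := h
    _ = 2 * K := by field_simp; ring

lemma le_energyDensity (hu : Measurable u) (hlip : LipschitzOnWith K u (Iic b)) {p q : ℝ}
    (hp : 0 < p) (hpq : p ≤ q) (hq : q ≤ b - x)
    (hjump : ∀ z ∈ Ioo p q, 1 ≤ |u (x + z) - u x|) :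
    1 / p - 1 / q ≤ energyDensity u b x := by
  have hx : x ≤ b := by linarith
  calc 1 / p - 1 / q = ∫ z in Ioo p q, 1 / z ^ 2 := (integral_Ioo_one_div_sq hp hpq).symm
    _ ≤ ∫ z in Ioo p q, (u (x + z) - u x) ^ 2 / z ^ 2 := by
        refine setIntegral_mono_on ((integrableOn_Ioi_one_div_sq hp).mono_set Ioo_subset_Ioi_self)
          ((integrableOn_sq_sub_div_sq hu hlip hx).mono_set (Ioo_subset_Ioo hp.le hq))
          measurableSet_Ioo fun z hz => ?_
        exact div_le_div_of_nonneg_right (one_le_sq_iff_one_le_abs _ |>.2 (hjump z hz))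
          (sq_nonneg z)
    _ ≤ energyDensity u b x :=
        setIntegral_mono_set (integrableOn_sq_sub_div_sq hu hlip hx)
          (ae_of_all _ fun _ => by positivity) (Ioo_subset_Ioo hp.le hq).eventuallyLE

lemma intervalIntegrable_energyDensity (hu : Measurable u) (hu01 : MapsTo u (Iic b) (Icc 0 1))
    (hlip : LipschitzOnWith K u (Iic b)) (hK : 0 < K) {c d : ℝ} (hc : c ≤ b) (hd : d ≤ b) :
    IntervalIntegrable (energyDensity u b) volume c d := by
  refine intervalIntegrable_iff.2 <| IntegrableOn.of_bound measure_Ioc_lt_top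
    (measurable_energyDensity hu).aestronglyMeasurable (2 * K) ?_
  rw [ae_restrict_iff' measurableSet_Ioc]
  refine ae_of_all _ fun x hx => ?_
  rw [Real.norm_of_nonneg energyDensity_nonneg]
  exact energyDensity_le_two_mul hu01 hlip hK (hx.2.trans (max_le hc hd))

lemma integral_energyDensity_le_of_eqOn (hu : Measurable u) (hu01 : MapsTo u (Iic b) (Icc 0 1))
    (hlip : LipschitzOnWith K u (Iic b)) (hK : 0 < K) {c d v δ : ℝ}
    (hconst : EqOn u (fun _ => v) (Icc c d)) (hd : d ≤ b) (hδ : 0 < δ) (hcδ : c ≤ d - δ) :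
    ∫ x in c..d - δ, energyDensity u b x ≤ log (d - c) - log δ := by
  calc ∫ x in c..d - δ, energyDensity u b x ≤ ∫ x in c..d - δ, 1 / (d - x) :=
        intervalIntegral.integral_mono_on hcδ
          (intervalIntegrable_energyDensity hu hu01 hlip hK (by linarith) (by linarith))
          (intervalIntegrable_one_div_sub hcδ (by linarith)) fun x hx =>
            energyDensity_le_of_eqOn hu01 hconst ⟨hx.1, by linarith [hx.2]⟩ hd
    _ = log (d - c) - log δ := by rw [integral_one_div_sub hcδ (by linarith), sub_sub_cancel]

lemma integral_energyDensity_le_mul (hu : Measurable u) (hu01 : MapsTo u (Iic b) (Icc 0 1))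
    (hlip : LipschitzOnWith K u (Iic b)) (hK : 0 < K) {c d : ℝ} (hcd : c ≤ d) (hd : d ≤ b) :
    ∫ x in c..d, energyDensity u b x ≤ 2 * K * (d - c) := by
  calc ∫ x in c..d, energyDensity u b x ≤ ∫ _ in c..d, 2 * (K : ℝ) :=
        intervalIntegral.integral_mono_on hcd
          (intervalIntegrable_energyDensity hu hu01 hlip hK (hcd.trans hd) hd)
          intervalIntegrable_const fun x hx =>
            energyDensity_le_two_mul hu01 hlip hK (hx.2.trans hd)
    _ = 2 * K * (d - c) := by rw [intervalIntegral.integral_const, smul_eq_mul]; ring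

lemma le_integral_energyDensity (hu : Measurable u) (hu01 : MapsTo u (Iic b) (Icc 0 1))
    (hlip : LipschitzOnWith K u (Iic b)) (hK : 0 < K) {c d p q : ℝ} (hcd : c ≤ d) (hdp : d < p)
    (hpq : p ≤ q) (hq : q ≤ b) (hjump : ∀ x ∈ Icc c d, ∀ y ∈ Ioo p q, 1 ≤ |u y - u x|) :
    log (p - c) - log (p - d) - (d - c) / (q - d) ≤ ∫ x in c..d, energyDensity u b x := by
  have hfar : ∀ x ∈ Icc c d, 1 / (p - x) - 1 / (q - d) ≤ energyDensity u b x := by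
    intro x hx
    have hqx : 1 / (q - x) ≤ 1 / (q - d) :=
      one_div_le_one_div_of_le (by linarith) (by linarith [hx.2])
    have hE := le_energyDensity (b := b) hu hlip (sub_pos.2 (hx.2.trans_lt hdp))
      (sub_le_sub_right hpq x) (sub_le_sub_right hq x) fun z hz =>
        hjump x hx (x + z) ⟨by linarith [hz.1], by linarith [hz.2]⟩
    linarith
  calc log (p - c) - log (p - d) - (d - c) / (q - d)
        = ∫ x in c..d, (1 / (p - x) - 1 / (q - d)) := by
          rw [intervalIntegral.integral_sub (intervalIntegrable_one_div_sub hcd hdp)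
            intervalIntegrable_const, integral_one_div_sub hcd hdp,
            intervalIntegral.integral_const, smul_eq_mul]
          ring
    _ ≤ ∫ x in c..d, energyDensity u b x :=
        intervalIntegral.integral_mono_on hcd
          ((intervalIntegrable_one_div_sub hcd hdp).sub intervalIntegrable_const)
          (intervalIntegrable_energyDensity hu hu01 hlip hK (by linarith) (by linarith)) hfar

end energyDensity

section uRegEnergy
variable {L ε : ℝ}

lemma integral_energyDensity_uReg_le (hε : 0 < ε) (hεL : ε < L / 8) :
    ∫ x in Ioo 0 L, energyDensity (uReg L ε) L x ≤ 2 * log (1 / ε) + (2 * log (L / 2) + 16) := by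
  have hK : 0 < (2 / ε).toNNReal := Real.toNNReal_pos.2 (by positivity)
  have hlip := lipschitzOnWith_uReg hε (by linarith : ε ≤ L / 4)
  have hint : ∀ c d, c ≤ L → d ≤ L →
      IntervalIntegrable (energyDensity (uReg L ε) L) volume c d := fun _ _ =>
    intervalIntegrable_energyDensity measurable_uReg (mapsTo_uReg hε) hlip hK
  have hA := integral_energyDensity_le_of_eqOn measurable_uReg (mapsTo_uReg hε) hlip hK
    (c := 0) (d := L / 2) (v := 1) (fun x hx => uReg_of_le_half hx.2) (by linarith) hε
    (by linarith)
  have hB := integral_energyDensity_le_mul measurable_uReg (mapsTo_uReg hε) hlip hK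
    (c := L / 2 - ε) (d := L / 2 + ε) (by linarith) (by linarith)
  have hC := integral_energyDensity_le_of_eqOn measurable_uReg (mapsTo_uReg hε) hlip hK
    (c := L / 2 + ε) (d := L - ε) (v := 0) (fun x hx => uReg_of_mem_Icc hε hx) (by linarith) hε
    (by linarith)
  have hD := integral_energyDensity_le_mul measurable_uReg (mapsTo_uReg hε) hlip hK
    (c := L - ε - ε) (d := L) (by linarith) le_rfl
  have hsplit₁ := intervalIntegral.integral_add_adjacent_intervals
    (hint 0 (L / 2 - ε) (by linarith) (by linarith)) (hint _ L (by linarith) le_rfl)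
  have hsplit₂ := intervalIntegral.integral_add_adjacent_intervals
    (hint (L / 2 - ε) (L / 2 + ε) (by linarith) (by linarith)) (hint _ L (by linarith) le_rfl)
  have hsplit₃ := intervalIntegral.integral_add_adjacent_intervals
    (hint (L / 2 + ε) (L - ε - ε) (by linarith) (by linarith)) (hint _ L (by linarith) le_rfl)
  have hK' : (((2 / ε).toNNReal : ℝ≥0) : ℝ) = 2 / ε := Real.coe_toNNReal _ (by positivity)
  have hB' : 2 * (2 / ε) * (L / 2 + ε - (L / 2 - ε)) = 8 := by field_simp; ring
  have hD' : 2 * (2 / ε) * (L - (L - ε - ε)) = 8 := by field_simp; ring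
  have hlogC : log (L - ε - (L / 2 + ε)) ≤ log (L / 2) := log_le_log (by linarith) (by linarith)
  rw [hK', hB'] at hB
  rw [hK', hD'] at hD
  rw [sub_zero] at hA
  rw [← integral_Ioc_eq_integral_Ioo, ← intervalIntegral.integral_of_le (by linarith),
    one_div, log_inv]
  linarith

lemma le_integral_energyDensity_uReg (hε : 0 < ε) (hεL : ε < L / 8) :
    log (1 / ε) - (1 - log (L / 4)) ≤ ∫ x in Ioo 0 L, energyDensity (uReg L ε) L x := by
  have hK : 0 < (2 / ε).toNNReal := Real.toNNReal_pos.2 (by positivity)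
  have hlip := lipschitzOnWith_uReg hε (by linarith : ε ≤ L / 4)
  have hjump : ∀ x ∈ Icc (L / 4) (L / 2), ∀ y ∈ Ioo (L / 2 + ε) (L - ε),
      1 ≤ |uReg L ε y - uReg L ε x| := fun x hx y hy => by
    rw [uReg_of_le_half hx.2, uReg_of_mem_Icc hε (Ioo_subset_Icc_self hy)]
    norm_num
  have hmid := le_integral_energyDensity measurable_uReg (mapsTo_uReg hε) hlip hK
    (by linarith) (by linarith) (by linarith) (by linarith) hjump
  have hmono : ∫ x in L / 4..L / 2, energyDensity (uReg L ε) L x ≤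
      ∫ x in 0..L, energyDensity (uReg L ε) L x :=
    intervalIntegral.integral_mono_interval (by linarith) (by linarith) (by linarith)
      (ae_of_all _ fun _ => energyDensity_nonneg)
      (intervalIntegrable_energyDensity measurable_uReg (mapsTo_uReg hε) hlip hK
        (by linarith) le_rfl)
  have hlog : log (L / 4) ≤ log (L / 2 + ε - L / 4) := log_le_log (by linarith) (by linarith)
  have hfrac : (L / 2 - L / 4) / (L - ε - L / 2) ≤ 1 := (div_le_one (by linarith)).2 (by linarith)
  rw [add_sub_cancel_left] at hmid
  rw [← integral_Ioc_eq_integral_Ioo, ← intervalIntegral.integral_of_le (by linarith),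
    one_div, log_inv]
  linarith

end uRegEnergy

lemma exists_log_sandwich {P : ℝ → Prop} {F : ℝ → ℝ} {m M A B : ℝ} (hm : 0 < m) (hmM : m ≤ M)
    (hF : ∀ ε, 0 < ε → P ε → m * log (1 / ε) - A ≤ F ε ∧ F ε ≤ M * log (1 / ε) + B) :
    ∃ c₁ c₂ : ℝ, 0 < c₁ ∧ c₁ ≤ c₂ ∧ ∃ ε₀ > 0, ∀ ε : ℝ, 0 < ε → ε < ε₀ → P ε →
      c₁ * log (1 / ε) ≤ F ε ∧ F ε ≤ c₂ * log (1 / ε) := by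
  refine ⟨m / 2, M + 1, half_pos hm, by linarith, exp (-max (2 * A / m) B), exp_pos _,
    fun ε hε hε₀ hP => ?_⟩
  have hlog : max (2 * A / m) B < log (1 / ε) := by
    rw [one_div, log_inv, lt_neg]
    exact (log_lt_iff_lt_exp hε).2 hε₀
  have hA : 2 * A < m * log (1 / ε) := by
    rw [← div_lt_iff₀' hm]
    exact (le_max_left _ _).trans_lt hlog
  have hB : B < log (1 / ε) := (le_max_right _ _).trans_lt hlog
  obtain ⟨hlo, hup⟩ := hF ε hε hP
  constructor <;> linarith

theorem stmt14_general (L : ℝ) :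
    ∃ c₁ c₂ : ℝ, 0 < c₁ ∧ c₁ ≤ c₂ ∧ ∃ ε₀ > 0, ∀ ε : ℝ, 0 < ε → ε < ε₀ → ε < L / 8 →
      c₁ * Real.log (1 / ε) ≤
        (∫ x in Set.Ioo 0 L, ∫ z in Set.Ioo 0 (L - x),
          (uReg L ε (x + z) - uReg L ε x) ^ 2 / z ^ 2) ∧
      (∫ x in Set.Ioo 0 L, ∫ z in Set.Ioo 0 (L - x),
          (uReg L ε (x + z) - uReg L ε x) ^ 2 / z ^ 2) ≤ c₂ * Real.log (1 / ε) :=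
  exists_log_sandwich (F := fun ε => ∫ x in Ioo 0 L, energyDensity (uReg L ε) L x)
    (m := 1) (M := 2) one_pos one_le_two fun _ hε hεL =>
      ⟨by simpa using le_integral_energyDensity_uReg hε hεL,
        integral_energyDensity_uReg_le hε hεL⟩

theorem stmt14 (L : ℝ) (hL : 0 < L) :
    ∃ c₁ c₂ : ℝ, 0 < c₁ ∧ c₁ ≤ c₂ ∧ ∃ ε₀ > 0, ∀ ε : ℝ, 0 < ε → ε < ε₀ → ε < L / 8 →
      c₁ * Real.log (1 / ε) ≤
        (∫ x in Set.Ioo 0 L, ∫ z in Set.Ioo 0 (L - x),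
          (uReg L ε (x + z) - uReg L ε x) ^ 2 / z ^ 2) ∧
      (∫ x in Set.Ioo 0 L, ∫ z in Set.Ioo 0 (L - x),
          (uReg L ε (x + z) - uReg L ε x) ^ 2 / z ^ 2) ≤ c₂ * Real.log (1 / ε) :=
  stmt14_general L
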